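/- arXiv:1610.09576 — 6 statements merged into one kernel-verified Lean document; each statement's English description precedes it below -/
import Mathlib

section
/- Let T be a tree in which every vertex has degree at least 3. Then for every finite nonempty subtree A of T, |A| ≤ 2|∂A|, where ∂A is the set of vertices of A adjacent in T to a vertex outside A. -/
open SimpleGraph Set

/-- The vertex boundary of a set `A` in a graph `G`. -/
def vbdry {V : Type*} (G : SimpleGraph V) (A : Set V) : Set V :=
  {v ∈ A | ∃ u ∉ A, G.Adj v u}

/-- In a locally finite tree all of whose vertices have degree at least 3, every
finite nonempty subtree `A` satisfies `|A| ≤ 2|∂A|`. -/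
theorem subtree_card_le_two_mul_boundary {V : Type*} (T : SimpleGraph V)
    (hT : T.IsTree) (hlf : ∀ v, (T.neighborSet v).Finite)
    (hdeg : ∀ v, 3 ≤ (T.neighborSet v).ncard)
    (A : Set V) (hfin : A.Finite) (hne : A.Nonempty)
    (hconn : (T.induce A).Connected) :
    A.ncard ≤ 2 * (vbdry T A).ncard := by
  classical
  haveI : Fintype A := hfin.fintype
  set G := T.induce A with hGdef
  -- G is acyclic, hence a tree
  have hac : G.IsAcyclic := by
    intro v c hc
    exact hT.IsAcyclic (c.map (Embedding.induce A).toHom)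
      (hc.map Subtype.val_injective)
  have hGtree : G.IsTree := ⟨hconn, hac⟩
  -- vbdry is finite
  have hbfin : (vbdry T A).Finite := hfin.subset (fun v hv => hv.1)
  -- ncard of A
  have hAcard : A.ncard = Fintype.card A := by
    rw [Set.ncard_eq_toFinset_card', Set.toFinset_card]
  -- any vertex of A with induced degree ≤ 2 is in the boundary
  have hkey : ∀ v : A, G.degree v ≤ 2 → (v : V) ∈ vbdry T A := by
    intro v hv
    by_contra h
    have hall : ∀ u, T.Adj (v : V) u → u ∈ A := by
      intro u hu
      by_contra hu'
      exact h ⟨v.2, u, hu', hu⟩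
    -- inject T.neighborSet ↑v into G.neighborSet v
    have hinj : Function.Injective
        (fun u : T.neighborSet (v : V) =>
          (⟨⟨u.1, hall u.1 u.2⟩, u.2⟩ : G.neighborSet v)) := by
      intro a b hab
      simp only [Subtype.mk.injEq] at hab
      exact Subtype.ext (congrArg (fun x : G.neighborSet v => ((x : A) : V)) hab)
    have hle : Nat.card (T.neighborSet (v : V)) ≤ Nat.card (G.neighborSet v) :=
      Nat.card_le_card_of_injective _ hinj
    rw [Nat.card_coe_set_eq, Nat.card_coe_set_eq] at hle
    have h3 := hdeg (v : V)
    have hdegv : (G.neighborSet v).ncard = G.degree v := by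
      rw [Set.ncard_eq_toFinset_card', Set.toFinset_card]
      exact G.card_neighborSet_eq_degree v
    omega
  set S : Finset A := Finset.univ.filter (fun v => 3 ≤ G.degree v) with hS
  set B : Finset A := Finset.univ.filter (fun v => ¬ 3 ≤ G.degree v) with hB
  -- B injects into the boundary
  have hBle : B.card ≤ (vbdry T A).ncard := by
    have hsub : ↑(B.image (Subtype.val : A → V)) ⊆ vbdry T A := by
      intro x hx
      simp only [Finset.coe_image, Set.mem_image, Finset.mem_coe] at hx
      obtain ⟨v, hv, rfl⟩ := hx
      rw [hB, Finset.mem_filter] at hv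
      exact hkey v (by omega)
    calc B.card = (B.image (Subtype.val : A → V)).card :=
          (Finset.card_image_of_injective _ Subtype.val_injective).symm
      _ = (↑(B.image (Subtype.val : A → V)) : Set V).ncard :=
          (Set.ncard_coe_finset _).symm
      _ ≤ (vbdry T A).ncard := Set.ncard_le_ncard hsub hbfin
  have hSB : S.card + B.card = Fintype.card A := by
    rw [hS, hB, Finset.card_filter_add_card_filter_not, Finset.card_univ]
  rcases Nat.lt_or_ge (Fintype.card A) 2 with hsmall | hbig
  · -- |A| ≤ 1
    have h1 : (vbdry T A).ncard ≠ 0 := by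
      obtain ⟨v, hv⟩ := hne
      have h3 := hdeg v
      have : ∃ u, T.Adj v u := by
        by_contra hno
        push_neg at hno
        have : T.neighborSet v = ∅ := by
          ext u; simp [SimpleGraph.mem_neighborSet, hno u]
        rw [this] at h3; simp at h3
      obtain ⟨u, hu⟩ := this
      rcases Classical.em (u ∈ A) with huA | huA
      · -- both u and v in A, so card A ≥ 2
        have : u ≠ v := fun h => T.irrefl (h ▸ hu)
        have : 2 ≤ Fintype.card A :=
          Fintype.card_le_of_injective (fun b : Bool => if b then ⟨v, hv⟩ else ⟨u, huA⟩)
            (by intro a b hab; cases a <;> cases b <;> simp_all)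
        omega
      · have : v ∈ vbdry T A := ⟨hv, u, huA, hu⟩
        exact ((Set.ncard_pos hbfin).mpr ⟨v, this⟩).ne'
    omega
  · -- |A| ≥ 2 : every vertex has degree ≥ 1 in G
    have hdeg1 : ∀ v : A, 1 ≤ G.degree v := by
      intro v
      obtain ⟨w, hw⟩ := Fintype.exists_ne_of_one_lt_card (by omega) v
      obtain ⟨p⟩ := hconn v w
      cases p with
      | nil => exact absurd rfl hw
      | cons h q =>
        exact (G.degree_pos_iff_exists_adj v).mpr ⟨_, h⟩
    -- degree sum formula
    have hsum : ∑ v : A, G.degree v = 2 * G.edgeFinset.card :=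
      G.sum_degrees_eq_twice_card_edges
    have hE : G.edgeFinset.card + 1 = Fintype.card A := hGtree.card_edgeFinset
    have hsplit : ∑ v ∈ S, G.degree v + ∑ v ∈ B, G.degree v = ∑ v : A, G.degree v := by
      rw [hS, hB]
      exact Finset.sum_filter_add_sum_filter_not _ _ _
    have hSsum : S.card * 3 ≤ ∑ v ∈ S, G.degree v := by
      have := Finset.card_nsmul_le_sum S (fun v => G.degree v) 3
        (fun v hv => (Finset.mem_filter.mp hv).2)
      simpa [smul_eq_mul] using this
    have hBsum : B.card * 1 ≤ ∑ v ∈ B, G.degree v := by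
      have := Finset.card_nsmul_le_sum B (fun v => G.degree v) 1
        (fun v _ => hdeg1 v)
      simpa [smul_eq_mul] using this
    omega
end

section
/- If T_1 and T_2 are inessential subtrees of an infinite tree T with root(T_1) = root(T_2), then T_1 ∪ T_2 is an inessential subtree of T. -/
open SimpleGraph Set

/-- The subgraph of `T` spanned by the edges of `T` not in the subgraph `H`. -/
def complEdges {V : Type*} (T : SimpleGraph V) (H : T.Subgraph) : T.Subgraph where
  verts := {v | ∃ w, T.Adj v w ∧ ¬ H.Adj v w}
  Adj v w := T.Adj v w ∧ ¬ H.Adj v w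
  adj_sub h := h.1
  edge_vert {v w} h := ⟨w, h⟩
  symm := ⟨fun v w h => ⟨h.1.symm, fun ha => h.2 ha.symm⟩⟩

/-- A finite connected subgraph `H` of `T` with at least one edge is inessential
if the subgraph spanned by the edges `E(T) \ E(H)` is connected. -/
def Inessential {V : Type*} (T : SimpleGraph V) (H : T.Subgraph) : Prop :=
  H.verts.Finite ∧ H.edgeSet.Nonempty ∧ H.Connected ∧ (complEdges T H).Connected


/-- `r` is the root of the inessential subtree `H`: the common vertex of `H` and
the complementary tree. -/
def IsRoot {V : Type*} (T : SimpleGraph V) (H : T.Subgraph) (r : V) : Prop :=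
  r ∈ H.verts ∧ r ∈ (complEdges T H).verts

section Aux
variable {V : Type*} {T : SimpleGraph V}

lemma edges_map_hom {H : T.Subgraph} {a b : H.verts} (p : H.coe.Walk a b) :
    ∀ e ∈ (p.map H.hom).edges, e ∈ H.edgeSet := by
  induction p with
  | nil => simp
  | cons h q ih =>
    simp only [Walk.map_cons, Walk.edges_cons, List.mem_cons]
    rintro e (rfl | he)
    · exact Subgraph.mem_edgeSet.mpr h
    · exact ih e he

lemma exists_path_in {H : T.Subgraph} (hH : H.Connected) {u v : V}
    (hu : u ∈ H.verts) (hv : v ∈ H.verts) :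
    ∃ p : T.Walk u v, p.IsPath ∧ ∀ e ∈ p.edges, e ∈ H.edgeSet := by
  classical
  obtain ⟨q⟩ := hH.coe ⟨u, hu⟩ ⟨v, hv⟩
  let W : T.Walk u v := q.map H.hom
  exact ⟨W.toPath, W.toPath.2, fun e he => edges_map_hom q e (Walk.edges_toPath_subset _ he)⟩

/-- Lemma A : any vertex of `H` that has an edge of `T` outside `H` is the root. -/
lemma root_unique (hT : T.IsTree) {H : T.Subgraph} (hH : H.Connected)
    (hC : (complEdges T H).Connected) {r v : V} (hr : r ∈ H.verts)
    (hrC : r ∈ (complEdges T H).verts) (hv : v ∈ H.verts)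
    (hvC : v ∈ (complEdges T H).verts) : v = r := by
  by_contra hne
  obtain ⟨p, hp, hpe⟩ := exists_path_in hH hv hr
  obtain ⟨q, hq, hqe⟩ := exists_path_in hC hvC hrC
  obtain ⟨w, -, hw⟩ := hT.existsUnique_path v r
  have hpq : p = q := (hw p hp).trans (hw q hq).symm
  subst hpq
  cases p with
  | nil => exact hne rfl
  | cons h p' =>
    have h1 := hpe _ (List.mem_cons_self)
    have h2 := hqe _ (List.mem_cons_self)
    exact (Subgraph.mem_edgeSet.mp h2).2 (Subgraph.mem_edgeSet.mp h1)

/-- Lemma C : a walk leaving the non-root part of `H`, must pass through `r`. -/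
lemma exit_through_root {H : T.Subgraph} {r : V}
    (hA : ∀ a ∈ H.verts, a ≠ r → ∀ c, T.Adj a c → H.Adj a c)
    {a y : V} (W : T.Walk a y) :
    a ∈ H.verts → a ≠ r → (y ∈ H.verts → y = r) → r ∈ W.support := by
  induction W with
  | nil => intro ha hne hy; exact absurd (hy ha) hne
  | @cons x b y h W ih =>
    intro ha hne hy
    have hadj : H.Adj x b := hA x ha hne b h
    have hb : b ∈ H.verts := H.edge_vert hadj.symm
    rw [Walk.support_cons, List.mem_cons]
    by_cases hbr : b = r
    · subst hbr; exact Or.inr (Walk.start_mem_support W)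
    · exact Or.inr (ih hb hbr hy)

/-- Lemma B : a path whose endpoints are outside the non-root part of `H`
avoids the edges of `H`. -/
lemma path_avoids {H : T.Subgraph} {r : V}
    (hA : ∀ a ∈ H.verts, a ≠ r → ∀ c, T.Adj a c → H.Adj a c)
    {x y : V} (W : T.Walk x y) :
    W.IsPath → (x ∈ H.verts → x = r) → (y ∈ H.verts → y = r) →
      ∀ e ∈ W.edges, e ∉ H.edgeSet := by
  induction W with
  | nil => simp
  | @cons x b y h W ih =>
    intro hW hx hy
    by_cases hb : b ∈ H.verts ∧ b ≠ r
    · exfalso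
      have hrW : r ∈ W.support := exit_through_root hA W hb.1 hb.2 hy
      have hadj : H.Adj x b := (hA b hb.1 hb.2 x h.symm).symm
      have hxr : x = r := hx (H.edge_vert hadj)
      exact ((Walk.cons_isPath_iff h W).mp hW).2 (hxr ▸ hrW)
    · push_neg at hb
      simp only [Walk.edges_cons, List.mem_cons]
      rintro e (rfl | he)
      · intro hmem
        have hadj : H.Adj x b := Subgraph.mem_edgeSet.mp hmem
        have hxr : x = r := hx (H.edge_vert hadj)
        have hbr : b = r := hb (H.edge_vert hadj.symm)
        exact h.ne (hxr.trans hbr.symm)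
      · exact ih ((Walk.cons_isPath_iff h W).mp hW).1 hb hy e he

/-- Lemma D : a `T`-walk all of whose edges lie in `C` gives reachability in `C.coe`. -/
lemma reachable_of_walk {C : T.Subgraph} {u v : V} (W : T.Walk u v)
    (he : ∀ e ∈ W.edges, e ∈ C.edgeSet) (hu : u ∈ C.verts) (hv : v ∈ C.verts) :
    C.coe.Reachable ⟨u, hu⟩ ⟨v, hv⟩ := by
  induction W with
  | nil => rfl
  | @cons x b y h W ih =>
    have hadj : C.Adj x b :=
      Subgraph.mem_edgeSet.mp (he _ (List.mem_cons_self))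
    have hb : b ∈ C.verts := C.edge_vert hadj.symm
    have h1 : C.coe.Reachable ⟨x, hu⟩ ⟨b, hb⟩ := (Subgraph.Adj.coe hadj).reachable
    exact h1.trans (ih (fun e hE => he e (List.mem_cons_of_mem _ hE)) hb hv)

end Aux

/-- The union of two inessential subtrees of an infinite locally finite tree
with the same root is again an inessential subtree. -/
theorem inessential_union {V : Type*} [Infinite V] (T : SimpleGraph V)
    (hT : T.IsTree) (hlf : ∀ v, (T.neighborSet v).Finite)
    (T₁ T₂ : T.Subgraph) (h₁ : Inessential T T₁) (h₂ : Inessential T T₂)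
    (hroot : ∃ r : V, IsRoot T T₁ r ∧ IsRoot T T₂ r) :
    Inessential T (T₁ ⊔ T₂) := by
  obtain ⟨r, ⟨hr1, hr1C⟩, ⟨hr2, hr2C⟩⟩ := hroot
  obtain ⟨hf₁, he₁, hc₁, hcc₁⟩ := h₁
  obtain ⟨hf₂, he₂, hc₂, hcc₂⟩ := h₂
  have hA₂ : ∀ a ∈ T₂.verts, a ≠ r → ∀ c, T.Adj a c → T₂.Adj a c := by
    intro a ha hne c hadj
    by_contra h'
    exact hne (root_unique hT hc₂ hcc₂ hr2 hr2C ha ⟨c, hadj, h'⟩)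
  -- membership transfer lemmas
  have hmem₁ : ∀ {u : V}, u ∈ (complEdges T (T₁ ⊔ T₂)).verts →
      u ∈ (complEdges T T₁).verts := by
    rintro u ⟨w, hw, hnw⟩
    exact ⟨w, hw, fun h => hnw (Subgraph.sup_adj.mpr (Or.inl h))⟩
  have hmem₂ : ∀ {u : V}, u ∈ (complEdges T (T₁ ⊔ T₂)).verts →
      u ∈ (complEdges T T₂).verts := by
    rintro u ⟨w, hw, hnw⟩
    exact ⟨w, hw, fun h => hnw (Subgraph.sup_adj.mpr (Or.inr h))⟩
  refine ⟨?_, ?_, ?_, ?_⟩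
  · rw [Subgraph.verts_sup]; exact hf₁.union hf₂
  · exact Set.Nonempty.mono (Subgraph.edgeSet_mono le_sup_left) he₁
  · exact Subgraph.connected_sup hc₁.preconnected hc₂.preconnected ⟨r, hr1, hr2⟩
  · rw [Subgraph.connected_iff]
    constructor
    · constructor
      rintro ⟨u, hu⟩ ⟨v, hv⟩
      have hur : u ∈ T₂.verts → u = r := fun h =>
        root_unique hT hc₂ hcc₂ hr2 hr2C h (hmem₂ hu)
      have hvr : v ∈ T₂.verts → v = r := fun h =>
        root_unique hT hc₂ hcc₂ hr2 hr2C h (hmem₂ hv)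
      obtain ⟨p, hp, hpe⟩ := exists_path_in hcc₁ (hmem₁ hu) (hmem₁ hv)
      have hp2 := path_avoids hA₂ p hp hur hvr
      have hpC : ∀ e ∈ p.edges, e ∈ (complEdges T (T₁ ⊔ T₂)).edgeSet := by
        intro e heP
        induction e with
        | h a b =>
          have h1 : (complEdges T T₁).Adj a b := Subgraph.mem_edgeSet.mp (hpe _ heP)
          have h2 : ¬ T₂.Adj a b := fun h => hp2 _ heP (Subgraph.mem_edgeSet.mpr h)
          refine Subgraph.mem_edgeSet.mpr ⟨h1.1, fun h => ?_⟩
          rcases Subgraph.sup_adj.mp h with h | h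
          · exact h1.2 h
          · exact h2 h
      exact reachable_of_walk p hpC hu hv
    · -- nonemptiness : take a vertex outside the finite set of vertices
      obtain ⟨u, hu⟩ := ((hf₁.union hf₂).infinite_compl).nonempty
      obtain ⟨w, hw⟩ := exists_ne u
      obtain ⟨q⟩ := hT.isConnected.preconnected u w
      cases q with
      | nil => exact absurd rfl hw.symm
      | @cons x b y h q =>
        refine ⟨u, b, h, fun hab => ?_⟩
        rcases Subgraph.sup_adj.mp hab with h' | h'
        · exact hu (Or.inl (T₁.edge_vert h'))
        · exact hu (Or.inr (T₂.edge_vert h'))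
end

section
/- If the trimmed tree Θ(T) contains an inessential subtree with k vertices, then T contains an inessential subtree with at least k+1 vertices. -/
open SimpleGraph Set

/-- The vertex set of the trimmed tree `Θ(T)`: the non-leaf vertices of `T`. -/
def trimVerts {V : Type*} (T : SimpleGraph V) : Set V :=
  {v | (T.neighborSet v).ncard ≠ 1}

section Aux

variable {V : Type*} {W : Type*}

private lemma isAcyclic_of_injective_hom {G : SimpleGraph V} {G' : SimpleGraph W} (f : G →g G')
    (hf : Function.Injective f) (h : G'.IsAcyclic) : G.IsAcyclic := by
  apply isAcyclic_of_path_unique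
  intro v w p q
  exact Path.map_injective hf v w (h.path_unique (p.map f hf) (q.map f hf))

private lemma exists_walk_of_subgraph_reachable {G : SimpleGraph V} (K : G.Subgraph)
    {a b : K.verts} (h : K.coe.Reachable a b) :
    ∃ p : G.Walk a b, ∀ e ∈ p.edges, e ∈ K.edgeSet := by
  obtain ⟨w⟩ := h
  refine ⟨w.map K.hom, ?_⟩
  intro e he
  change e ∈ (w.map K.hom).edges at he
  rw [Walk.edges_map, List.mem_map] at he
  obtain ⟨e', he', rfl⟩ := he
  have h2 := w.edges_subset_edgeSet he'
  induction e' with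
  | h x y =>
    rw [SimpleGraph.mem_edgeSet] at h2
    exact Subgraph.mem_edgeSet.mpr h2

private lemma exists_crossing {G : SimpleGraph V} {A : Set V} :
    ∀ {a b : V} (_ : G.Walk a b), a ∉ A → b ∈ A → ∃ c ∈ A, ∃ d, d ∉ A ∧ G.Adj c d := by
  intro a b p
  induction p with
  | nil => intro ha hb; exact absurd hb ha
  | @cons u x v h q ih =>
    intro ha hb
    by_cases hx : x ∈ A
    · exact ⟨x, hx, u, ha, h.symm⟩
    · exact ih hx hb

private lemma boundary_unique {G : SimpleGraph V} (hG : G.IsAcyclic) {K : G.Subgraph}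
    (hK : K.Connected) (hC : (complEdges G K).Connected) {u v x y : V}
    (hu : u ∈ K.verts) (hv : v ∈ K.verts) (hux : G.Adj u x) (hux' : ¬ K.Adj u x)
    (hvy : G.Adj v y) (hvy' : ¬ K.Adj v y) : u = v := by
  classical
  by_contra hne
  have huc : u ∈ (complEdges G K).verts := ⟨x, hux, hux'⟩
  have hvc : v ∈ (complEdges G K).verts := ⟨y, hvy, hvy'⟩
  obtain ⟨Wa, hW⟩ := exists_walk_of_subgraph_reachable _ (hC.coe.preconnected ⟨u, huc⟩ ⟨v, hvc⟩)
  obtain ⟨P, hP⟩ := exists_walk_of_subgraph_reachable _ (hK.coe.preconnected ⟨u, hu⟩ ⟨v, hv⟩)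
  have hWP : Wa.toPath = P.toPath := hG.path_unique _ _
  have hlen : (P.toPath : G.Walk u v).length ≠ 0 := by
    intro h0
    exact hne (Walk.eq_of_length_eq_zero h0)
  have hedges : (P.toPath : G.Walk u v).edges ≠ [] := by
    intro h0
    rw [← Walk.length_edges, h0] at hlen
    simp at hlen
  obtain ⟨e, he⟩ := List.exists_mem_of_ne_nil _ hedges
  have he1 : e ∈ P.edges := Walk.edges_toPath_subset P he
  have he2 : e ∈ Wa.edges := Walk.edges_toPath_subset Wa (by rw [hWP]; exact he)
  have hK1 := hP e he1
  have hK2 := hW e he2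
  induction e with
  | h a b =>
    rw [Subgraph.mem_edgeSet] at hK1 hK2
    exact hK2.2 hK1

private lemma exists_leaf {G : SimpleGraph V} [Finite V] (hc : G.Connected) (hac : G.IsAcyclic)
    (b₀ : V) (hne : ∃ v, v ≠ b₀) :
    ∃ u, u ≠ b₀ ∧ ∀ x y, G.Adj u x → G.Adj u y → x = y := by
  classical
  have : Nonempty V := ⟨b₀⟩
  obtain ⟨u, hu⟩ := Finite.exists_max (fun v => G.dist b₀ v)
  obtain ⟨v, hv⟩ := hne
  have hvpos : 0 < G.dist b₀ v := hc.pos_dist_of_ne (Ne.symm hv)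
  have hupos : 0 < G.dist b₀ u := lt_of_lt_of_le hvpos (hu v)
  have hub : u ≠ b₀ := by rintro rfl; simp [SimpleGraph.dist_self] at hupos
  obtain ⟨p, hp, hlen⟩ := hc.exists_path_of_dist b₀ u
  have key : ∀ x, G.Adj u x → x ∈ p.support := by
    intro x hx
    by_contra hxs
    have hq : (p.concat hx).IsPath := by
      rw [← Walk.isPath_reverse_iff, Walk.reverse_concat]
      rw [Walk.cons_isPath_iff]
      refine ⟨hp.reverse, ?_⟩
      rwa [Walk.support_reverse, List.mem_reverse]
    obtain ⟨r, hr, hrlen⟩ := hc.exists_path_of_dist b₀ x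
    have heq := hac.path_unique ⟨p.concat hx, hq⟩ ⟨r, hr⟩
    have hlen2 : (p.concat hx).length = r.length := by
      rw [show (p.concat hx) = r from congrArg Subtype.val heq]
    rw [Walk.length_concat, hlen, hrlen] at hlen2
    have := hu x
    omega
  have key2 : ∀ x (hx : G.Adj u x),
      (p.takeUntil x (key x hx)).concat hx.symm = p := by
    intro x hx
    have hxu : x ≠ u := hx.ne'
    have hts := p.take_spec (key x hx)
    have hnodup := hp.support_nodup
    have hu_not : u ∉ (p.takeUntil x (key x hx)).support := by
      intro hmem
      have hd : u ∈ (p.dropUntil x (key x hx)).support.tail := by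
        have h1 : u ∈ (p.dropUntil x (key x hx)).support := Walk.end_mem_support _
        rw [Walk.support_eq_cons] at h1
        rcases List.mem_cons.mp h1 with h1 | h1
        · exact absurd h1.symm hxu
        · exact h1
      rw [← hts, Walk.support_append] at hnodup
      have := List.disjoint_of_nodup_append hnodup
      exact this hmem hd
    have hqpath : ((p.takeUntil x (key x hx)).concat hx.symm).IsPath := by
      rw [← Walk.isPath_reverse_iff, Walk.reverse_concat, Walk.cons_isPath_iff]
      refine ⟨(hp.takeUntil _).reverse, ?_⟩
      rwa [Walk.support_reverse, List.mem_reverse]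
    have := hac.path_unique ⟨(p.takeUntil x (key x hx)).concat hx.symm, hqpath⟩ ⟨p, hp⟩
    exact congrArg Subtype.val this
  refine ⟨u, hub, ?_⟩
  intro x y hx hy
  have hex := key2 x hx
  have hey := key2 y hy
  have hE : ((p.takeUntil x (key x hx)).concat hx.symm).edges
      = ((p.takeUntil y (key y hy)).concat hy.symm).edges := by rw [hex, hey]
  rw [Walk.edges_concat, Walk.edges_concat] at hE
  have := congrArg List.getLast? hE
  rw [List.concat_eq_append, List.concat_eq_append, List.getLast?_concat,
    List.getLast?_concat] at this
  have hE2 : s(x, u) = s(y, u) := Option.some.inj this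
  exact Sym2.congr_left.mp hE2

end Aux

def liftSub {V : Type*} (T : SimpleGraph V) (H : (T.induce (trimVerts T)).Subgraph) :
    T.Subgraph where
  verts := (Subtype.val '' H.verts) ∪
    {x | x ∉ trimVerts T ∧ ∃ u ∈ Subtype.val '' H.verts, T.Adj x u}
  Adj a b := (∃ (ha : a ∈ trimVerts T) (hb : b ∈ trimVerts T), H.Adj ⟨a, ha⟩ ⟨b, hb⟩) ∨
    (T.Adj a b ∧ ((a ∈ Subtype.val '' H.verts ∧ b ∉ trimVerts T) ∨
      (b ∈ Subtype.val '' H.verts ∧ a ∉ trimVerts T)))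
  adj_sub := by
    rintro a b (⟨ha, hb, h⟩ | ⟨h, _⟩)
    · exact H.adj_sub h
    · exact h
  edge_vert := by
    rintro a b (⟨ha, hb, h⟩ | ⟨h, hc⟩)
    · exact Or.inl ⟨⟨a, ha⟩, H.edge_vert h, rfl⟩
    · rcases hc with ⟨haS, hbL⟩ | ⟨hbS, haL⟩
      · exact Or.inl haS
      · exact Or.inr ⟨haL, b, hbS, h⟩
  symm := by
    constructor
    rintro a b (⟨ha, hb, h⟩ | ⟨h, hc⟩)
    · exact Or.inl ⟨hb, ha, h.symm⟩
    · exact Or.inr ⟨h.symm, hc.symm⟩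

/-- If the trimmed tree `Θ(T)` contains an inessential subtree with `k` vertices,
then `T` contains an inessential subtree with at least `k + 1` vertices. -/
theorem inessential_lift_of_trim {V : Type*} [Infinite V] (T : SimpleGraph V)
    (hT : T.IsTree) (hlf : ∀ v, (T.neighborSet v).Finite)
    (hinf : (trimVerts T).Infinite) (k : ℕ)
    (H : (T.induce (trimVerts T)).Subgraph)
    (hH : Inessential (T.induce (trimVerts T)) H) (hcard : H.verts.ncard = k) :
    ∃ H' : T.Subgraph, Inessential T H' ∧ k + 1 ≤ H'.verts.ncard := by
  classical
  obtain ⟨hHfin, hHedge, hHconn, hHcompl⟩ := hH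
  have hTacyc := hT.IsAcyclic
  have hTconn := hT.isConnected
  have hΘacyc : (T.induce (trimVerts T)).IsAcyclic :=
    isAcyclic_of_injective_hom
      ((SimpleGraph.Embedding.induce (trimVerts T)) : T.induce (trimVerts T) ↪g T).toHom
      ((SimpleGraph.Embedding.induce (trimVerts T)) : T.induce (trimVerts T) ↪g T).injective
      hTacyc
  set H' : T.Subgraph := liftSub T H with hH'def
  -- basic facts
  have hSsub : (Subtype.val '' H.verts) ⊆ trimVerts T := by
    rintro _ ⟨⟨x, hx⟩, _, rfl⟩; exact hx
  have hSfin : (Subtype.val '' H.verts).Finite := hHfin.image _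
  have hH'fin : H'.verts.Finite := by
    refine hSfin.union ((hSfin.biUnion (fun a _ => hlf a)).subset ?_)
    rintro x ⟨hx, u, huS, hadj⟩
    exact Set.mem_biUnion huS (hadj.symm : T.Adj u x)
  -- every vertex has a neighbor
  have hdeg : ∀ v : V, (T.neighborSet v).Nonempty := by
    intro v
    obtain ⟨w, hw⟩ := exists_ne v
    obtain ⟨p⟩ := hTconn.preconnected v w
    cases p with
    | nil => exact absurd rfl hw
    | cons h q => exact ⟨_, h⟩
  -- leaves have a unique neighbor
  have hleaf : ∀ x, x ∉ trimVerts T → ∀ a b, T.Adj x a → T.Adj x b → a = b := by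
    intro x hx a b ha hb
    have h1 : (T.neighborSet x).ncard = 1 := not_not.mp hx
    obtain ⟨c, hc⟩ := Set.ncard_eq_one.mp h1
    have ha' : a ∈ T.neighborSet x := ha
    have hb' : b ∈ T.neighborSet x := hb
    rw [hc] at ha' hb'
    rw [ha', hb']
  -- boundary vertex existence
  have hbex : ∃ (b₀ : ↥(trimVerts T)) (_ : b₀ ∈ H.verts) (x₀ : ↥(trimVerts T)),
      (↑x₀ : V) ∉ H'.verts ∧ (T.induce (trimVerts T)).Adj b₀ x₀ ∧ ¬ H.Adj b₀ x₀ := by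
    obtain ⟨y, hy⟩ := hH'fin.infinite_compl.nonempty
    obtain ⟨t, ht⟩ := hHconn.nonempty
    have htm : (↑t : V) ∈ H'.verts := Or.inl ⟨t, ht, rfl⟩
    obtain ⟨p⟩ := hTconn.preconnected y ↑t
    obtain ⟨c, hcH, d, hdH, hcd⟩ := exists_crossing p hy htm
    have hcS : c ∈ Subtype.val '' H.verts := by
      rcases hcH with h | ⟨hct, u, huS, hadj⟩
      · exact h
      · exfalso
        have hdu : d = u := hleaf c hct d u hcd hadj
        exact hdH (Or.inl (by rw [hdu]; exact huS))
    obtain ⟨b₀, hb₀, rfl⟩ := hcS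
    have hdt : d ∈ trimVerts T := by
      by_contra hdt
      exact hdH (Or.inr ⟨hdt, ↑b₀, ⟨b₀, hb₀, rfl⟩, hcd.symm⟩)
    refine ⟨b₀, hb₀, ⟨d, hdt⟩, hdH, hcd, ?_⟩
    intro hadj
    exact hdH (Or.inl ⟨⟨d, hdt⟩, H.edge_vert hadj.symm, rfl⟩)
  obtain ⟨b₀, hb₀, x₀, hx₀, hbx₀, hnbx₀⟩ := hbex
  -- uniqueness of the boundary vertex
  have huniq : ∀ (u : ↥(trimVerts T)), u ∈ H.verts →
      ∀ x : ↥(trimVerts T), (T.induce (trimVerts T)).Adj u x → ¬ H.Adj u x → u = b₀ := by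
    intro u hu x hux hux'
    exact boundary_unique hΘacyc hHconn hHcompl hu hb₀ hux hux' hbx₀ hnbx₀
  -- the unique boundary vertex of H' in T
  have hkey : ∀ a, a ∈ H'.verts → ∀ x, T.Adj a x → ¬ H'.Adj a x → a = ↑b₀ := by
    intro a haH x hax hax'
    rcases haH with ⟨u, huH, rfl⟩ | ⟨hat, w, hwS, haw⟩
    · by_cases hxt : x ∈ trimVerts T
      · have hΘadj : (T.induce (trimVerts T)).Adj u ⟨x, hxt⟩ := hax
        by_cases hHadj : H.Adj u ⟨x, hxt⟩
        · exact absurd (Or.inl ⟨u.2, hxt, hHadj⟩) hax'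
        · exact congrArg Subtype.val (huniq u huH ⟨x, hxt⟩ hΘadj hHadj)
      · exact absurd (Or.inr ⟨hax, Or.inl ⟨⟨u, huH, rfl⟩, hxt⟩⟩) hax'
    · have hxw : x = w := hleaf a hat x w hax haw
      exact absurd (Or.inr ⟨hax, Or.inr ⟨hxw ▸ hwS, hat⟩⟩) hax'
  -- b₀ is in the complement subgraph
  have hTbx : T.Adj ↑b₀ ↑x₀ := hbx₀
  have hnH' : ¬ H'.Adj ↑b₀ ↑x₀ := by
    intro h
    exact hx₀ (H'.edge_vert h.symm)
  have hv₀K : (↑b₀ : V) ∈ (complEdges T H').verts := ⟨↑x₀, hTbx, hnH'⟩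
  -- walk induction for connectivity of the complement
  have walkind : ∀ (a c : V) (p : T.Walk a c), p.IsPath → c = ↑b₀ →
      ∀ (ha : a ∈ (complEdges T H').verts) (hc : c ∈ (complEdges T H').verts),
      (complEdges T H').coe.Reachable ⟨a, ha⟩ ⟨c, hc⟩ := by
    intro a c p
    induction p with
    | nil => intro _ _ ha hc; exact Reachable.refl _
    | @cons a m c h q ih =>
      intro hp hcb ha hcK
      by_cases hadj : H'.Adj a m
      · exfalso
        obtain ⟨w, hw1, hw2⟩ := ha
        have hav : a = ↑b₀ := hkey a (H'.edge_vert hadj) w hw1 hw2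
        have hac : a = c := hav.trans hcb.symm
        rw [Walk.cons_isPath_iff] at hp
        exact hp.2 (by rw [hac]; exact q.end_mem_support)
      · have hmK : m ∈ (complEdges T H').verts := ⟨a, h.symm, fun hh => hadj hh.symm⟩
        have hstep : (complEdges T H').coe.Adj ⟨a, ha⟩ ⟨m, hmK⟩ := ⟨h, hadj⟩
        exact hstep.reachable.trans (ih hp.of_cons hcb hmK hcK)
  have hKreach : ∀ (y : V) (hy : y ∈ (complEdges T H').verts),
      (complEdges T H').coe.Reachable ⟨y, hy⟩ ⟨↑b₀, hv₀K⟩ := by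
    intro y hy
    obtain ⟨w⟩ := hTconn.preconnected y ↑b₀
    exact walkind y ↑b₀ w.toPath w.toPath.2 rfl hy hv₀K
  have hcompl : (complEdges T H').Connected := by
    rw [Subgraph.connected_iff]
    refine ⟨⟨?_⟩, ⟨↑b₀, hv₀K⟩⟩
    rintro ⟨y, hy⟩ ⟨z, hz⟩
    exact (hKreach y hy).trans (hKreach z hz).symm
  -- H' is connected
  let hHom : H.coe →g H'.coe :=
    { toFun := fun z => ⟨(↑(↑z : ↥(trimVerts T)) : V), Or.inl ⟨↑z, z.2, rfl⟩⟩,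
      map_rel' := fun {p q} hpq => Or.inl ⟨(↑p : ↥(trimVerts T)).2, (↑q : ↥(trimVerts T)).2, hpq⟩ }
  have hbase : ∀ (u : ↥(trimVerts T)) (hu : u ∈ H.verts),
      H'.coe.Reachable ⟨↑u, Or.inl ⟨u, hu, rfl⟩⟩ ⟨↑b₀, Or.inl ⟨b₀, hb₀, rfl⟩⟩ := by
    intro u hu
    exact Reachable.map hHom (hHconn.coe.preconnected ⟨u, hu⟩ ⟨b₀, hb₀⟩)
  have hH'conn : H'.Connected := by
    rw [Subgraph.connected_iff]
    refine ⟨⟨?_⟩, ⟨↑b₀, Or.inl ⟨b₀, hb₀, rfl⟩⟩⟩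
    have hre : ∀ (y : V) (hy : y ∈ H'.verts),
        H'.coe.Reachable ⟨y, hy⟩ ⟨↑b₀, Or.inl ⟨b₀, hb₀, rfl⟩⟩ := by
      intro y hy
      have hy2 := hy
      rcases hy2 with ⟨u, hu, rfl⟩ | ⟨hyt, w, hwS, hyw⟩
      · exact hbase u hu
      · obtain ⟨u', hu', rfl⟩ := hwS
        have hstep : H'.coe.Adj ⟨y, hy⟩ ⟨↑u', Or.inl ⟨u', hu', rfl⟩⟩ :=
          Or.inr ⟨hyw, Or.inr ⟨⟨u', hu', rfl⟩, hyt⟩⟩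
        exact hstep.reachable.trans (hbase u' hu')
    rintro ⟨y, hy⟩ ⟨z, hz⟩
    exact (hre y hy).trans (hre z hz).symm
  -- H' has an edge
  have hH'edge : H'.edgeSet.Nonempty := by
    obtain ⟨e, he⟩ := hHedge
    induction e with
    | h u v =>
      rw [Subgraph.mem_edgeSet] at he
      exact ⟨s(↑u, ↑v), Subgraph.mem_edgeSet.mpr (Or.inl ⟨u.2, v.2, he⟩)⟩
  -- there is an extra (leaf) vertex in H'
  have hℓex : ∃ ℓ, ℓ ∉ trimVerts T ∧ ℓ ∈ H'.verts := by
    obtain ⟨e, he⟩ := hHedge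
    have hex2 : ∃ u v : ↥H.verts, ((↑u : ↥(trimVerts T)) : V) ≠ ((↑v : ↥(trimVerts T)) : V) := by
      induction e with
      | h u v =>
        rw [Subgraph.mem_edgeSet] at he
        exact ⟨⟨u, H.edge_vert he⟩, ⟨v, H.edge_vert he.symm⟩,
          fun hh => (H.adj_sub he).ne (Subtype.ext hh)⟩
    haveI : Finite ↥H.verts := hHfin.to_subtype
    have hcacyc : H.coe.IsAcyclic :=
      isAcyclic_of_injective_hom H.hom Subgraph.hom_injective hΘacyc
    obtain ⟨u1, u2, h12⟩ := hex2
    have hneB : ∃ v : ↥H.verts, v ≠ ⟨b₀, hb₀⟩ := by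
      by_cases h1 : u1 = ⟨b₀, hb₀⟩
      · refine ⟨u2, fun h2 => h12 ?_⟩
        rw [h1, h2]
      · exact ⟨u1, h1⟩
    obtain ⟨u, hune, hulone⟩ := exists_leaf hHconn.coe hcacyc ⟨b₀, hb₀⟩ hneB
    have hut : ((↑(↑u : ↥(trimVerts T)) : V)) ∈ trimVerts T := (↑u : ↥(trimVerts T)).2
    have hne1 : (T.neighborSet ↑(↑u : ↥(trimVerts T))).ncard ≠ 1 := hut
    have hpos : 0 < (T.neighborSet ↑(↑u : ↥(trimVerts T))).ncard :=
      (Set.ncard_pos (hlf _)).mpr (hdeg _)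
    have h2 : 1 < (T.neighborSet ↑(↑u : ↥(trimVerts T))).ncard := by omega
    obtain ⟨x, y, hx, hy, hxy⟩ := (Set.one_lt_ncard_iff (hlf _)).mp h2
    have hHadj : ∀ z (hz : z ∈ trimVerts T),
        T.Adj ↑(↑u : ↥(trimVerts T)) z → H.Adj ↑u ⟨z, hz⟩ := by
      intro z hz hadj
      by_contra hn
      have := huniq ↑u u.2 ⟨z, hz⟩ hadj hn
      exact hune (Subtype.ext this)
    by_cases hxt : x ∈ trimVerts T
    · by_cases hyt : y ∈ trimVerts T
      · exfalso
        have hax := hHadj x hxt hx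
        have hay := hHadj y hyt hy
        have h1 : H.coe.Adj u ⟨⟨x, hxt⟩, H.edge_vert hax.symm⟩ := hax
        have h2' : H.coe.Adj u ⟨⟨y, hyt⟩, H.edge_vert hay.symm⟩ := hay
        have := hulone _ _ h1 h2'
        exact hxy (congrArg (fun z : ↥H.verts => ((↑z : ↥(trimVerts T)) : V)) this)
      · exact ⟨y, hyt, Or.inr ⟨hyt, _, ⟨↑u, u.2, rfl⟩, hy.symm⟩⟩
    · exact ⟨x, hxt, Or.inr ⟨hxt, _, ⟨↑u, u.2, rfl⟩, hx.symm⟩⟩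
  obtain ⟨ℓ, hℓt, hℓH'⟩ := hℓex
  have hℓS : ℓ ∉ Subtype.val '' H.verts := fun h => hℓt (hSsub h)
  have hSncard : (Subtype.val '' H.verts).ncard = k := by
    rw [Set.ncard_image_of_injective _ Subtype.val_injective, hcard]
  have hsub : insert ℓ (Subtype.val '' H.verts) ⊆ H'.verts := by
    intro z hz
    rcases Set.mem_insert_iff.mp hz with rfl | hz'
    · exact hℓH'
    · exact Or.inl hz'
  have hins : (insert ℓ (Subtype.val '' H.verts)).ncard = k + 1 := by
    rw [Set.ncard_insert_of_notMem hℓS hSfin, hSncard]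
  refine ⟨H', ⟨hH'fin, hH'edge, hH'conn, hcompl⟩, ?_⟩
  rw [← hins]
  exact Set.ncard_le_ncard hsub hH'fin
end

section
/- If T is an infinite locally finite tree such that Θ^k(T) has a leaf for every k ≥ 0 (i.e., T can be trimmed indefinitely), then T contains inessential subtrees with arbitrarily many vertices. -/
open SimpleGraph Set

/-- The neighbors of `v` inside the set `S`, i.e. its neighborhood in the induced
subgraph on `S`. -/
def nbrsIn {V : Type*} (T : SimpleGraph V) (S : Set V) (v : V) : Set V :=
  {u ∈ S | T.Adj v u}

/-- The leaves of the induced subgraph of `T` on `S`. -/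
def leavesIn {V : Type*} (T : SimpleGraph V) (S : Set V) : Set V :=
  {v ∈ S | (nbrsIn T S v).ncard = 1}

/-- The vertex set of the `k`-fold trimmed tree `Θ^k(T)`: iteratively remove all
leaves. -/
def trimIter {V : Type*} (T : SimpleGraph V) : ℕ → Set V
  | 0 => Set.univ
  | k + 1 => trimIter T k \ leavesIn T (trimIter T k)


section Aux
variable {V : Type*}

/-- The branch at `v` away from `w`: component of `v` after deleting edge `vw`. -/
def branchAt (T : SimpleGraph V) (v w : V) : Set V :=
  {u | (T.deleteEdges {s(v,w)}).Reachable v u}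

lemma mem_branchAt_self (T : SimpleGraph V) (v w : V) : v ∈ branchAt T v w :=
  Reachable.refl v

lemma bridge_aux {T : SimpleGraph V} (hT : T.IsAcyclic) {v w : V} (h : T.Adj v w) :
    ¬ (T.deleteEdges {s(v,w)}).Reachable v w :=
  (isAcyclic_iff_forall_adj_isBridge.mp hT) h

lemma not_mem_branchAt {T : SimpleGraph V} (hT : T.IsAcyclic) {u v : V} (h : T.Adj v u) :
    v ∉ branchAt T u v :=
  bridge_aux hT h.symm

lemma adj_mem_branchAt {T : SimpleGraph V} {v w u : V} (h : T.Adj v u) (hne : u ≠ w) :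
    u ∈ branchAt T v w := by
  refine Adj.reachable ?_
  rw [deleteEdges_adj]
  refine ⟨h, ?_⟩
  simp only [mem_singleton_iff, Sym2.eq_iff]
  rintro (⟨-, rfl⟩ | ⟨rfl, rfl⟩) <;> exact hne rfl

lemma branchAt_mono {T : SimpleGraph V} (hT : T.IsAcyclic) {v w u : V}
    (h : T.Adj v u) (hne : u ≠ w) : branchAt T u v ⊆ branchAt T v w := by
  classical
  intro x hx
  obtain ⟨p⟩ := hx
  have hvsup : v ∉ p.support := by
    intro hv
    exact bridge_aux hT h.symm ⟨p.takeUntil v hv⟩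
  have hedges : ∀ e ∈ p.edges, e ∈ (T.deleteEdges {s(v,w)}).edgeSet := by
    intro e he
    rw [edgeSet_deleteEdges]
    refine ⟨edgeSet_mono (deleteEdges_le _) (p.edges_subset_edgeSet he), ?_⟩
    intro hew
    rw [mem_singleton_iff] at hew
    subst hew
    exact hvsup (p.fst_mem_support_of_mem_edges he)
  have hq : (T.deleteEdges {s(v,w)}).Walk u x := p.transfer _ hedges
  have hadj : (T.deleteEdges {s(v,w)}).Adj v u := by
    rw [deleteEdges_adj]
    refine ⟨h, ?_⟩
    simp only [mem_singleton_iff, Sym2.eq_iff]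
    rintro (⟨-, rfl⟩ | ⟨rfl, rfl⟩) <;> exact hne rfl
  exact ⟨Walk.cons hadj hq⟩

lemma branchAt_decomp {T : SimpleGraph V} {v w x : V} (hx : x ∈ branchAt T v w)
    (hne : x ≠ v) : ∃ u, T.Adj v u ∧ u ≠ w ∧ x ∈ branchAt T u v := by
  classical
  obtain ⟨p0⟩ := hx
  obtain ⟨p, hp⟩ : ∃ p : (T.deleteEdges {s(v,w)}).Walk v x, p.IsPath :=
    ⟨(p0.toPath : _), (p0.toPath).2⟩
  cases p with
  | nil => exact absurd rfl hne.symm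
  | cons hadj q =>
    rename_i b
    rw [Walk.cons_isPath_iff] at hp
    have hbT : T.Adj v b := (deleteEdges_adj.mp hadj).1
    have hbw : b ≠ w := by
      intro hbw; subst hbw
      exact (deleteEdges_adj.mp hadj).2 rfl
    refine ⟨b, hbT, hbw, ?_⟩
    have hedges : ∀ e ∈ q.edges, e ∈ (T.deleteEdges {s(b,v)}).edgeSet := by
      intro e he
      rw [edgeSet_deleteEdges]
      refine ⟨edgeSet_mono (deleteEdges_le _) (q.edges_subset_edgeSet he), ?_⟩
      intro hew
      rw [mem_singleton_iff] at hew
      subst hew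
      exact hp.2 (q.snd_mem_support_of_mem_edges he)
    exact ⟨q.transfer _ hedges⟩

lemma trimIter_anti (T : SimpleGraph V) : Antitone (trimIter T) :=
  antitone_nat_of_succ_le fun n => diff_subset

lemma stage_lemma {T : SimpleGraph V} {x : V} {k : ℕ} (hx : x ∉ trimIter T k) :
    ∃ j < k, x ∈ leavesIn T (trimIter T j) := by
  induction k with
  | zero => exact absurd (mem_univ x) hx
  | succ k ih =>
    by_cases hk : x ∈ trimIter T k
    · refine ⟨k, Nat.lt_succ_self k, ?_⟩
      by_contra hxl
      exact hx ⟨hk, hxl⟩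
    · obtain ⟨j, hj, hjl⟩ := ih hk
      exact ⟨j, hj.trans (Nat.lt_succ_self k), hjl⟩

lemma leaf_unique_nbr {T : SimpleGraph V} {S : Set V} {v w : V}
    (hv : v ∈ leavesIn T S) (hw : w ∈ nbrsIn T S v) : nbrsIn T S v = {w} := by
  obtain ⟨a, ha⟩ := Set.ncard_eq_one.mp hv.2
  rw [ha] at hw ⊢
  rw [mem_singleton_iff] at hw
  rw [hw]

/-- Main lemma: a leaf `v` of `trimIter T k` with unique trim-neighbor `w` has a
finite branch away from `w`, with at least `k+1` vertices. -/
lemma branch_finite_big {T : SimpleGraph V} (hT : T.IsAcyclic)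
    (hlf : ∀ v, (T.neighborSet v).Finite) :
    ∀ k : ℕ, ∀ v w : V, v ∈ leavesIn T (trimIter T k) →
      nbrsIn T (trimIter T k) v = {w} →
      (branchAt T v w).Finite ∧ k + 1 ≤ (branchAt T v w).ncard := by
  intro k
  induction k using Nat.strong_induction_on with
  | _ k ih =>
  intro v w hv hw
  have hwmem : w ∈ nbrsIn T (trimIter T k) v := by rw [hw]; exact rfl
  have hadj_vw : T.Adj v w := hwmem.2
  -- every vertex of the branch other than v lives in some earlier-trimmed branch
  have hib : ∀ u ∈ T.neighborSet v \ {w}, (branchAt T u v).Finite := by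
    rintro u ⟨huN, huw⟩
    rw [mem_singleton_iff] at huw
    have hunotk : u ∉ trimIter T k := by
      intro hu
      have : u ∈ nbrsIn T (trimIter T k) v := ⟨hu, huN⟩
      rw [hw, mem_singleton_iff] at this
      exact huw this
    obtain ⟨j, hj, hjl⟩ := stage_lemma hunotk
    have hvj : v ∈ trimIter T j := trimIter_anti T hj.le hv.1
    have hnb : nbrsIn T (trimIter T j) u = {v} :=
      leaf_unique_nbr hjl ⟨hvj, huN.symm⟩
    exact (ih j hj u v hjl hnb).1
  have hsub : branchAt T v w ⊆ insert v (⋃ u ∈ T.neighborSet v \ {w}, branchAt T u v) := by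
    intro x hx
    by_cases hxv : x = v
    · exact hxv ▸ mem_insert _ _
    · obtain ⟨u, hadj, huw, hxu⟩ := branchAt_decomp hx hxv
      exact mem_insert_of_mem _ (mem_biUnion ⟨hadj, huw⟩ hxu)
  have hfin : (branchAt T v w).Finite :=
    Finite.subset (Finite.insert v (Finite.biUnion ((hlf v).diff) hib)) hsub
  refine ⟨hfin, ?_⟩
  cases k with
  | zero =>
    rw [Nat.zero_add, Nat.one_le_iff_ne_zero, ← Nat.pos_iff_ne_zero, Set.ncard_pos hfin]
    exact ⟨v, mem_branchAt_self T v w⟩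
  | succ m =>
    -- v had at least two neighbors at stage m
    have hvm1 : v ∈ trimIter T (m+1) := hv.1
    have hvm : v ∈ trimIter T m := hvm1.1
    have hnotleaf : v ∉ leavesIn T (trimIter T m) := hvm1.2
    have hfinm : (nbrsIn T (trimIter T m) v).Finite :=
      (hlf v).subset fun u hu => hu.2
    have hsub2 : nbrsIn T (trimIter T (m+1)) v ⊆ nbrsIn T (trimIter T m) v :=
      fun u hu => ⟨trimIter_anti T (Nat.le_succ m) hu.1, hu.2⟩
    have h1le : 1 ≤ (nbrsIn T (trimIter T m) v).ncard := by
      have := Set.ncard_le_ncard hsub2 hfinm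
      rw [hv.2] at this
      exact this
    have hne1 : (nbrsIn T (trimIter T m) v).ncard ≠ 1 := by
      intro h1
      exact hnotleaf ⟨hvm, h1⟩
    have h2le : 1 < (nbrsIn T (trimIter T m) v).ncard :=
      lt_of_le_of_ne h1le (Ne.symm hne1)
    obtain ⟨u, hu, huw⟩ := Set.exists_ne_of_one_lt_ncard h2le w
    have hadj_vu : T.Adj v u := hu.2
    have hunotm1 : u ∉ trimIter T (m+1) := by
      intro hum1
      have : u ∈ nbrsIn T (trimIter T (m+1)) v := ⟨hum1, hadj_vu⟩
      rw [hw, mem_singleton_iff] at this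
      exact huw this
    have hul : u ∈ leavesIn T (trimIter T m) := by
      by_contra hul
      exact hunotm1 ⟨hu.1, hul⟩
    have hnb : nbrsIn T (trimIter T m) u = {v} :=
      leaf_unique_nbr hul ⟨hvm, hadj_vu.symm⟩
    obtain ⟨hufin, hucard⟩ := ih m (Nat.lt_succ_self m) u v hul hnb
    have hmono : branchAt T u v ⊆ branchAt T v w := branchAt_mono hT hadj_vu huw
    have hvnot : v ∉ branchAt T u v := not_mem_branchAt hT hadj_vu
    have hins : insert v (branchAt T u v) ⊆ branchAt T v w :=
      insert_subset (mem_branchAt_self T v w) hmono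
    calc m + 1 + 1 ≤ (branchAt T u v).ncard + 1 := by omega
      _ = (insert v (branchAt T u v)).ncard := (Set.ncard_insert_of_notMem hvnot hufin).symm
      _ ≤ (branchAt T v w).ncard := Set.ncard_le_ncard hins hfin

end Aux

/-- If an infinite locally finite tree can be trimmed indefinitely (every `Θ^k(T)`
has a leaf), then it contains inessential subtrees with arbitrarily many vertices. -/
theorem large_inessential_of_trim_indefinitely {V : Type*} [Infinite V]
    (T : SimpleGraph V) (hT : T.IsTree) (hlf : ∀ v, (T.neighborSet v).Finite)
    (htrim : ∀ k : ℕ, (leavesIn T (trimIter T k)).Nonempty) :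
    ∀ n : ℕ, ∃ H : T.Subgraph, Inessential T H ∧ n ≤ H.verts.ncard := by
  classical
  intro n
  set k := max n 1 with hkdef
  obtain ⟨v, hv⟩ := htrim k
  obtain ⟨w, hw⟩ := Set.ncard_eq_one.mp hv.2
  set S := branchAt T v w with hSdef
  have hadj_vw : T.Adj v w := (show w ∈ nbrsIn T (trimIter T k) v by rw [hw]; exact rfl).2
  obtain ⟨hfin, hcard⟩ := branch_finite_big hT.IsAcyclic hlf k v w hv hw
  have hwS : w ∉ S := bridge_aux hT.IsAcyclic hadj_vw
  have hvS : v ∈ S := mem_branchAt_self T v w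
  let H : T.Subgraph :=
    { verts := S
      Adj := fun a b => T.Adj a b ∧ a ∈ S ∧ b ∈ S
      adj_sub := fun h => h.1
      edge_vert := fun h => h.2.1
      symm := ⟨fun a b h => ⟨h.1.symm, h.2.2, h.2.1⟩⟩ }
  -- every vertex of S other than v has all its neighbors in S
  have all_nbrs : ∀ a ∈ S, a ≠ v → ∀ b, T.Adj a b → b ∈ S := by
    intro a haS hav b hab
    have hnot : s(a,b) ∉ ({s(v,w)} : Set (Sym2 V)) := by
      simp only [Set.mem_singleton_iff, Sym2.eq_iff]
      rintro (⟨h1, -⟩ | ⟨h1, -⟩)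
      · exact hav h1
      · exact hwS (h1 ▸ haS)
    exact haS.trans (Adj.reachable (SimpleGraph.deleteEdges_adj.mpr ⟨hab, hnot⟩))
  -- H is connected
  have hconn : ∀ x y (p : (T.deleteEdges {s(v,w)}).Walk x y), ∀ (hx : x ∈ S) (hy : y ∈ S),
      H.coe.Reachable ⟨x, hx⟩ ⟨y, hy⟩ := by
    intro x y p
    induction p with
    | nil => intro hx hy; exact Reachable.refl _
    | @cons a b c h q ihq =>
      intro hx hy
      have hbS : b ∈ S := hx.trans h.reachable
      have hadj : H.coe.Adj ⟨a, hx⟩ ⟨b, hbS⟩ := ⟨(SimpleGraph.deleteEdges_adj.mp h).1, hx, hbS⟩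
      exact hadj.reachable.trans (ihq hbS hy)
  have HConn : H.Connected := by
    rw [SimpleGraph.Subgraph.connected_iff']
    have hne : Nonempty H.verts := ⟨⟨v, hvS⟩⟩
    refine ⟨?_⟩
    rintro ⟨a, ha⟩ ⟨b, hb⟩
    obtain ⟨p⟩ := id ha
    obtain ⟨q⟩ := id hb
    exact (hconn v a p hvS ha).symm.trans (hconn v b q hvS hb)
  -- complEdges is connected
  set C := complEdges T H with hCdef
  have hvC : v ∈ C.verts := ⟨w, hadj_vw, fun hH => hwS hH.2.2⟩
  have hSv : ∀ a, a ∈ C.verts → a ∈ S → a = v := by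
    rintro a ⟨b, hab, hnH⟩ haS
    by_contra hav
    exact hnH ⟨hab, haS, all_nbrs a haS hav b hab⟩
  have hreach : ∀ a b (p : T.Walk a b), a ∉ S → ∀ (ha : a ∈ C.verts), b = v →
      C.coe.Reachable ⟨a, ha⟩ ⟨v, hvC⟩ := by
    intro a b p
    induction p with
    | nil => intro haS _ hb; exact absurd hvS (hb ▸ haS)
    | @cons x y z h q ihq =>
      intro haS ha hb
      by_cases hbS : y ∈ S
      · have hbv : y = v := by
          by_contra hbv
          exact haS (all_nbrs y hbS hbv x h.symm)
        have hadj : C.coe.Adj ⟨x, ha⟩ ⟨v, hvC⟩ := ⟨hbv ▸ h, fun hH => haS hH.2.1⟩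
        exact hadj.reachable
      · have hbC : y ∈ C.verts := ⟨x, h.symm, fun hH => hbS hH.2.1⟩
        have hadj : C.coe.Adj ⟨x, ha⟩ ⟨y, hbC⟩ := ⟨h, fun hH => haS hH.2.1⟩
        exact hadj.reachable.trans (ihq hbS hbC hb)
  have toV : ∀ a (ha : a ∈ C.verts), C.coe.Reachable ⟨a, ha⟩ ⟨v, hvC⟩ := by
    intro a ha
    by_cases haS : a ∈ S
    · obtain rfl := hSv a ha haS
      exact Reachable.refl _
    · obtain ⟨p⟩ := hT.isConnected.preconnected a v
      exact hreach a v p haS ha rfl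
  have CConn : C.Connected := by
    rw [SimpleGraph.Subgraph.connected_iff']
    have hne : Nonempty C.verts := ⟨⟨v, hvC⟩⟩
    refine ⟨?_⟩
    rintro ⟨a, ha⟩ ⟨b, hb⟩
    exact (toV a ha).trans (toV b hb).symm
  -- H has an edge
  have h1k : 1 ≤ k := le_max_right n 1
  have hcard' : k + 1 ≤ S.ncard := by rw [hSdef]; exact hcard
  have h2 : 1 < S.ncard := by omega
  obtain ⟨x, hxS, hxv⟩ := Set.exists_ne_of_one_lt_ncard h2 v
  obtain ⟨u, hadj_vu, huw, -⟩ := branchAt_decomp hxS hxv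
  have huS : u ∈ S := adj_mem_branchAt hadj_vu huw
  have hedge : H.edgeSet.Nonempty :=
    ⟨s(v,u), SimpleGraph.Subgraph.mem_edgeSet.mpr ⟨hadj_vu, hvS, huS⟩⟩
  refine ⟨H, ⟨hfin, hedge, HConn, CConn⟩, ?_⟩
  have : n ≤ k := le_max_left n 1
  show n ≤ S.ncard
  omega
end

section
/- An infinite locally finite tree T that can be trimmed indefinitely is amenable. -/
open SimpleGraph Set

/-- A graph is amenable if its Cheeger constant is zero. -/
def Amenable {V : Type*} (G : SimpleGraph V) : Prop :=
  ∀ ε : ℝ, 0 < ε →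
    ∃ A : Set V, A.Finite ∧ A.Nonempty ∧ ((vbdry G A).ncard : ℝ) ≤ ε * A.ncard

section Aux

variable {V : Type*} (T : SimpleGraph V)

lemma mem_trim_succ {k : ℕ} {x : V} :
    x ∈ trimIter T (k + 1) ↔ x ∈ trimIter T k ∧ x ∉ leavesIn T (trimIter T k) := Iff.rfl

lemma mem_nbrsIn {S : Set V} {x u : V} :
    u ∈ nbrsIn T S x ↔ u ∈ S ∧ T.Adj x u := Iff.rfl

lemma trim_anti {k m : ℕ} (h : k ≤ m) : trimIter T m ⊆ trimIter T k := by
  induction m, h using Nat.le_induction with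
  | base => exact subset_rfl
  | succ m hm ih => exact fun x hx => ih ((mem_trim_succ T).mp hx).1

lemma nbrsIn_sub (S : Set V) (x : V) : nbrsIn T S x ⊆ T.neighborSet x := fun u hu => hu.2

/-- second vertex of a nontrivial walk. -/
lemma exists_snd {a b : V} (q : T.Walk a b) (hne : a ≠ b) :
    ∃ c, T.Adj a c ∧ c ∈ q.support.tail := by
  cases q with
  | nil => exact absurd rfl hne
  | cons h p => exact ⟨_, h, by simpa using p.start_mem_support⟩

/-- A path between vertices surviving `k` trims stays within the survivors. -/
lemma trim_path (hlf : ∀ v, (T.neighborSet v).Finite) :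
    ∀ (k : ℕ) {a b : V} (p : T.Walk a b), p.IsPath → a ∈ trimIter T k → b ∈ trimIter T k →
      ∀ x ∈ p.support, x ∈ trimIter T k := by
  intro k
  induction k with
  | zero => intro a b p _ _ _ x _; exact Set.mem_univ x
  | succ k ih =>
    intro a b p hp ha hb x hx
    have hsub : ∀ y ∈ p.support, y ∈ trimIter T k :=
      ih p hp ((mem_trim_succ T).mp ha).1 ((mem_trim_succ T).mp hb).1
    by_cases hxa : x = a
    · exact hxa ▸ ha
    by_cases hxb : x = b
    · exact hxb ▸ hb
    obtain ⟨q, r, rfl⟩ := Walk.mem_support_iff_exists_append.mp hx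
    obtain ⟨c, hcadj, hcmem⟩ := exists_snd T q.reverse hxa
    have hcq : c ∈ q.support := by
      have := List.tail_subset _ hcmem
      rwa [Walk.support_reverse, List.mem_reverse] at this
    obtain ⟨d, hdadj, hdmem⟩ := exists_snd T r hxb
    have hnodup := hp.support_nodup
    rw [Walk.support_append] at hnodup
    have hdisj := (List.nodup_append'.mp hnodup).2.2
    have hcd : c ≠ d := fun h => hdisj hcq (h ▸ hdmem)
    have hck : c ∈ trimIter T k := by
      apply hsub c; rw [Walk.support_append]; exact List.mem_append_left _ hcq
    have hdk : d ∈ trimIter T k := by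
      apply hsub d; rw [Walk.support_append]
      exact List.mem_append_right _ hdmem
    have h2 : 1 < (nbrsIn T (trimIter T k) x).ncard := by
      rw [Set.one_lt_ncard ((hlf x).subset (nbrsIn_sub T _ x))]
      exact ⟨c, ⟨hck, hcadj⟩, d, ⟨hdk, hdadj⟩, hcd⟩
    refine (mem_trim_succ T).mpr ⟨hsub x hx, fun hl => ?_⟩
    have := hl.2
    omega

/-- A walk with support in `{x, v}` contains the edge `s(x,v)`. -/
lemma aux_edge {x v : V} (q : T.Walk x v) (hne : x ≠ v)
    (hsup : ∀ y ∈ q.support, y = x ∨ y = v) : s(x, v) ∈ q.edges := by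
  cases q with
  | nil => exact absurd rfl hne
  | cons h p =>
    rename_i c
    have hc := hsup c (by simp [p.start_mem_support])
    rcases hc with h1 | h2
    · exact absurd h1 h.ne'
    · subst h2; simp

/-- key length bound: a path from a live vertex through dead vertices has length
at most the trimming time. -/
lemma length_le (hlf : ∀ v, (T.neighborSet v).Finite) :
    ∀ (N : ℕ) {x u : V} (r : T.Walk x u), r.IsPath → x ∈ trimIter T N →
      (∀ y ∈ r.support, y = x ∨ y ∉ trimIter T N) → r.length ≤ N := by
  intro N
  induction N using Nat.strong_induction_on with
  | _ N IH =>
    intro x u r hr hx hsup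
    classical
    cases r with
    | nil => simp
    | cons hadj r' =>
      rename_i z
      rw [Walk.cons_isPath_iff] at hr
      have hzx : z ≠ x := fun h => hr.2 (h ▸ r'.start_mem_support)
      have hzdead : z ∉ trimIter T N :=
        (hsup z (by simp [r'.start_mem_support])).resolve_left hzx
      have hex : ∃ k, z ∉ trimIter T k := ⟨N, hzdead⟩
      have hk : z ∉ trimIter T (Nat.find hex) := Nat.find_spec hex
      have hkN : Nat.find hex ≤ N := Nat.find_min' hex hzdead
      have hk0 : Nat.find hex ≠ 0 := by
        intro h0; rw [h0] at hk; exact hk (Set.mem_univ z)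
      set k := Nat.find hex with hkdef
      have hj1 : z ∈ trimIter T (k - 1) :=
        not_not.mp (Nat.find_min hex (by omega))
      have hj2 : z ∉ trimIter T (k - 1 + 1) := by
        rwa [show k - 1 + 1 = k from by omega]
      have hleaf : z ∈ leavesIn T (trimIter T (k - 1)) := by
        by_contra hcon; exact hj2 ((mem_trim_succ T).mpr ⟨hj1, hcon⟩)
      obtain ⟨c0, hc0⟩ := Set.ncard_eq_one.mp hleaf.2
      have hxj : x ∈ trimIter T (k - 1) := trim_anti T (by omega) hx
      have hxn : x ∈ nbrsIn T (trimIter T (k - 1)) z := ⟨hxj, hadj.symm⟩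
      have hnb : nbrsIn T (trimIter T (k - 1)) z = {x} := by
        rw [hc0]
        rw [hc0] at hxn
        rw [Set.mem_singleton_iff] at hxn
        rw [hxn]
      have hsup' : ∀ y ∈ r'.support, y = z ∨ y ∉ trimIter T (k - 1) := by
        intro y hy
        by_contra hcon
        push_neg at hcon
        obtain ⟨hyz, hyj⟩ := hcon
        have hqp : (r'.takeUntil y hy).IsPath := hr.1.takeUntil hy
        have hqsub := r'.support_takeUntil_subset hy
        have hall := trim_path T hlf (k - 1) _ hqp hj1 hyj
        obtain ⟨c, hcadj, hcmem⟩ := exists_snd T (r'.takeUntil y hy) (Ne.symm hyz)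
        have hcmem' : c ∈ (r'.takeUntil y hy).support := List.tail_subset _ hcmem
        have hck : c ∈ trimIter T (k - 1) := hall c hcmem'
        have hcx : c = x := by
          have : c ∈ nbrsIn T (trimIter T (k - 1)) z := ⟨hck, hcadj⟩
          rw [hnb] at this
          exact this
        exact hr.2 (hcx ▸ hqsub hcmem')
      have hlen := IH (k - 1) (by omega) r' hr.1 hj1 hsup'
      rw [Walk.length_cons]
      omega

/-- balls (w.r.t. walks into `v`) are finite in a locally finite graph. -/
lemma ball_finite (hlf : ∀ v, (T.neighborSet v).Finite) (v : V) :
    ∀ n : ℕ, {u | ∃ q : T.Walk u v, q.length ≤ n}.Finite := by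
  intro n
  induction n with
  | zero =>
    apply Set.Finite.subset (Set.finite_singleton v)
    rintro u ⟨q, hq⟩
    cases q with
    | nil => exact Set.mem_singleton v
    | cons h p => simp [Walk.length_cons] at hq
  | succ n ih =>
    apply Set.Finite.subset (ih.union (ih.biUnion (fun x _ => hlf x)))
    rintro u ⟨q, hq⟩
    cases q with
    | nil => exact Or.inl ⟨Walk.nil, by simp⟩
    | cons h p =>
      rename_i c
      rw [Walk.length_cons] at hq
      exact Or.inr (Set.mem_biUnion ⟨p, by omega⟩ h.symm)

end Aux

/-- An infinite locally finite tree that can be trimmed indefinitely is amenable. -/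
theorem amenable_of_trim_indefinitely {V : Type*} [Infinite V]
    (T : SimpleGraph V) (hT : T.IsTree) (hlf : ∀ v, (T.neighborSet v).Finite)
    (htrim : ∀ k : ℕ, (leavesIn T (trimIter T k)).Nonempty) :
    Amenable T := by
  classical
  intro ε hε
  set n := max 1 ⌈ε⁻¹⌉₊ with hn_def
  have hn1 : 1 ≤ n := le_max_left _ _
  obtain ⟨v, hv⟩ := htrim n
  have hvmem : v ∈ trimIter T n := hv.1
  obtain ⟨w0, hw0⟩ := Set.ncard_eq_one.mp hv.2
  have hw : w0 ∈ trimIter T n ∧ T.Adj v w0 := by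
    have : w0 ∈ nbrsIn T (trimIter T n) v := by rw [hw0]; exact rfl
    exact this
  set A := {u | ∃ p : T.Walk u v, ∀ y ∈ p.support, y = v ∨ y ∉ trimIter T n} with hA_def
  have hvA : v ∈ A := ⟨Walk.nil, by intro y hy; simp at hy; exact Or.inl hy⟩
  have hAdead : ∀ u ∈ A, u = v ∨ u ∉ trimIter T n := by
    rintro u ⟨p, hp⟩
    exact hp u p.start_mem_support
  -- A is closed under adjacency away from v
  have hclosed : ∀ u ∈ A, u ≠ v → ∀ x, T.Adj u x → x ∈ A := by
    rintro u ⟨p, hp⟩ hu x hadj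
    by_cases hx : x = v ∨ x ∉ trimIter T n
    · refine ⟨Walk.cons hadj.symm p, ?_⟩
      intro y hy
      rw [Walk.support_cons] at hy
      rcases List.mem_cons.mp hy with h | h
      · exact h ▸ hx
      · exact hp y h
    · push_neg at hx
      exfalso
      set W : T.Walk x v := Walk.cons hadj.symm p with hW_def
      have hq1 : (W.toPath : T.Walk x v).IsPath := W.toPath.2
      have hqsub : (W.toPath : T.Walk x v).support ⊆ W.support := W.support_toPath_subset
      have hlive : ∀ y ∈ (W.toPath : T.Walk x v).support, y ∈ trimIter T n :=
        trim_path T hlf n _ hq1 hx.2 hvmem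
      have hsup2 : ∀ y ∈ (W.toPath : T.Walk x v).support, y = x ∨ y = v := by
        intro y hy
        have h1 := hlive y hy
        have h2 := hqsub hy
        rw [hW_def, Walk.support_cons] at h2
        rcases List.mem_cons.mp h2 with h | h
        · exact Or.inl h
        · rcases hp y h with h' | h'
          · exact Or.inr h'
          · exact absurd h1 h'
      have hedge : s(x, v) ∈ (W.toPath : T.Walk x v).edges :=
        aux_edge T _ hx.1 hsup2
      have hedge2 : s(x, v) ∈ W.edges := W.edges_toPath_subset hedge
      rw [hW_def, Walk.edges_cons] at hedge2
      rcases List.mem_cons.mp hedge2 with h | h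
      · have : v = u := Sym2.congr_right.mp h
        exact hu this.symm
      · have hxs : x ∈ p.support := p.fst_mem_support_of_mem_edges h
        rcases hp x hxs with h' | h'
        · exact hx.1 h'
        · exact h' hx.2
  -- the vertex boundary of A is exactly {v}
  have hw0A : w0 ∉ A := by
    intro hmem
    rcases hAdead w0 hmem with h | h
    · rw [h] at hw; exact T.irrefl hw.2
    · exact h hw.1
  have hbdry : vbdry T A = {v} := by
    ext u
    constructor
    · rintro ⟨huA, x, hxA, hadj⟩
      by_contra hne
      exact hxA (hclosed u huA hne x hadj)
    · rintro rfl
      exact ⟨hvA, w0, hw0A, hw.2⟩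
  -- A is finite
  have hAfin : A.Finite := by
    apply (ball_finite T hlf v n).subset
    rintro u ⟨p, hp⟩
    have hrpath : (p.toPath : T.Walk u v).reverse.IsPath := p.toPath.2.reverse
    have hrsup : ∀ y ∈ (p.toPath : T.Walk u v).reverse.support, y = v ∨ y ∉ trimIter T n := by
      intro y hy
      rw [Walk.support_reverse, List.mem_reverse] at hy
      exact hp y (p.support_toPath_subset hy)
    have hlen := length_le T hlf n _ hrpath hvmem hrsup
    rw [Walk.length_reverse] at hlen
    exact ⟨(p.toPath : T.Walk u v), hlen⟩
  -- the chain of vertices dying at successive times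
  have hchain : ∀ i : ℕ, 1 ≤ i → i ≤ n →
      ∃ u, u ∈ A ∧ u ∈ trimIter T (n - i) ∧ u ∉ trimIter T (n - i + 1) := by
    intro i
    induction i with
    | zero => omega
    | succ i ih =>
      intro _ hin
      by_cases hi0 : i = 0
      · subst hi0
        have hn1' : n - 1 + 1 = n := by omega
        have hv1 : v ∈ trimIter T (n - 1) := trim_anti T (by omega) hvmem
        have hv2 : v ∉ leavesIn T (trimIter T (n - 1)) := by
          have hvv : v ∈ trimIter T (n - 1 + 1) := by rw [hn1']; exact hvmem
          exact ((mem_trim_succ T).mp hvv).2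
        have hwn : w0 ∈ nbrsIn T (trimIter T (n - 1)) v :=
          ⟨trim_anti T (by omega) hw.1, hw.2⟩
        have hfin : (nbrsIn T (trimIter T (n - 1)) v).Finite :=
          (hlf v).subset (nbrsIn_sub T _ v)
        have hne1 : (nbrsIn T (trimIter T (n - 1)) v).ncard ≠ 1 := fun h => hv2 ⟨hv1, h⟩
        have hpos : 0 < (nbrsIn T (trimIter T (n - 1)) v).ncard :=
          (Set.ncard_pos hfin).mpr ⟨w0, hwn⟩
        have h1lt : 1 < (nbrsIn T (trimIter T (n - 1)) v).ncard := by omega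
        obtain ⟨y, hy, hyw⟩ := Set.exists_ne_of_one_lt_ncard h1lt w0
        have hynotn : y ∉ trimIter T n := by
          intro hyn
          apply hyw
          have : y ∈ nbrsIn T (trimIter T n) v := ⟨hyn, hy.2⟩
          rw [hw0] at this
          exact this
        refine ⟨y, ⟨Walk.cons hy.2.symm Walk.nil, ?_⟩, hy.1, ?_⟩
        · intro y' hy'
          simp only [Walk.support_cons, Walk.support_nil, List.mem_cons,
            List.mem_singleton, List.not_mem_nil, or_false] at hy'
          rcases hy' with h | h
          · exact h ▸ Or.inr hynotn
          · exact Or.inl h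
        · rw [hn1']; exact hynotn
      · obtain ⟨u, huA, hu1, hu2⟩ := ih (by omega) (by omega)
        have hni : n - i = n - (i + 1) + 1 := by omega
        have hu_leaf : u ∈ leavesIn T (trimIter T (n - i)) := by
          by_contra hcon; exact hu2 ((mem_trim_succ T).mpr ⟨hu1, hcon⟩)
        obtain ⟨z, hz⟩ := Set.ncard_eq_one.mp hu_leaf.2
        have hzmem : z ∈ nbrsIn T (trimIter T (n - i)) u := by
          rw [hz]; exact rfl
        have hu_in : u ∈ trimIter T (n - (i + 1) + 1) := by rw [← hni]; exact hu1
        have hu_nl : u ∉ leavesIn T (trimIter T (n - (i + 1))) := ((mem_trim_succ T).mp hu_in).2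
        have hu_in' : u ∈ trimIter T (n - (i + 1)) := ((mem_trim_succ T).mp hu_in).1
        have hz' : z ∈ nbrsIn T (trimIter T (n - (i + 1))) u :=
          ⟨trim_anti T (by omega) hzmem.1, hzmem.2⟩
        have hfin : (nbrsIn T (trimIter T (n - (i + 1))) u).Finite :=
          (hlf u).subset (nbrsIn_sub T _ u)
        have hne1 : (nbrsIn T (trimIter T (n - (i + 1))) u).ncard ≠ 1 := fun h =>
          hu_nl ⟨hu_in', h⟩
        have hpos : 0 < (nbrsIn T (trimIter T (n - (i + 1))) u).ncard :=
          (Set.ncard_pos hfin).mpr ⟨z, hz'⟩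
        have h1lt : 1 < (nbrsIn T (trimIter T (n - (i + 1))) u).ncard := by omega
        obtain ⟨y, hy, hyz⟩ := Set.exists_ne_of_one_lt_ncard h1lt z
        have hynotin : y ∉ trimIter T (n - i) := by
          intro hyn
          apply hyz
          have : y ∈ nbrsIn T (trimIter T (n - i)) u := ⟨hyn, hy.2⟩
          rw [hz] at this
          exact this
        have hynotn : y ∉ trimIter T n := fun h => hynotin (trim_anti T (by omega) h)
        obtain ⟨p, hp⟩ := huA
        refine ⟨y, ⟨Walk.cons hy.2.symm p, ?_⟩, hy.1, ?_⟩
        · intro y' hy'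
          rw [Walk.support_cons] at hy'
          rcases List.mem_cons.mp hy' with h | h
          · exact h ▸ Or.inr hynotn
          · exact hp y' h
        · rw [← hni]; exact hynotin
  -- build an injection from {0,...,n} into A
  have hgex : ∀ i : ℕ, ∃ u, 1 ≤ i → i ≤ n →
      u ∈ A ∧ u ∈ trimIter T (n - i) ∧ u ∉ trimIter T (n - i + 1) := by
    intro i
    by_cases h : 1 ≤ i ∧ i ≤ n
    · obtain ⟨u, hu⟩ := hchain i h.1 h.2
      exact ⟨u, fun _ _ => hu⟩
    · exact ⟨v, fun h1 h2 => absurd ⟨h1, h2⟩ h⟩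
  choose g hg using hgex
  have hkey : ∀ a b : ℕ, a ∈ Set.Icc 1 n → b ∈ Set.Icc 1 n → a < b → g a ≠ g b := by
    intro a b ha hb hab heq
    obtain ⟨ha1, ha2⟩ := Set.mem_Icc.mp ha
    obtain ⟨hb1, hb2⟩ := Set.mem_Icc.mp hb
    obtain ⟨_, h1a, h2a⟩ := hg a ha1 ha2
    obtain ⟨_, h1b, h2b⟩ := hg b hb1 hb2
    rw [heq] at h1a
    exact h2b (trim_anti T (by omega) h1a)
  have hinj : Set.InjOn g (Set.Icc 1 n) := by
    intro a ha b hb heq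
    by_contra hne
    rcases Nat.lt_or_ge a b with h | h
    · exact hkey a b ha hb h heq
    · exact hkey b a hb ha (by omega) heq.symm
  have himgsub : g '' Set.Icc 1 n ⊆ A := by
    rintro _ ⟨i, hi, rfl⟩
    exact (hg i hi.1 hi.2).1
  have hvnot : v ∉ g '' Set.Icc 1 n := by
    rintro ⟨i, hi, heq⟩
    obtain ⟨hi1, hi2⟩ := Set.mem_Icc.mp hi
    have := (hg i hi1 hi2).2.2
    rw [heq] at this
    exact this (trim_anti T (by omega) hvmem)
  have hSsub : insert v (g '' Set.Icc 1 n) ⊆ A := Set.insert_subset hvA himgsub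
  have himgfin : (g '' Set.Icc 1 n).Finite := hAfin.subset himgsub
  have hScard : (insert v (g '' Set.Icc 1 n)).ncard = n + 1 := by
    rw [Set.ncard_insert_of_notMem hvnot himgfin, Set.ncard_image_of_injOn hinj]
    rw [show (Set.Icc 1 n : Set ℕ) = ↑(Finset.Icc 1 n) by simp, Set.ncard_coe_finset,
      Nat.card_Icc]
    omega
  have hcard : n + 1 ≤ A.ncard := by
    rw [← hScard]
    exact Set.ncard_le_ncard hSsub hAfin
  refine ⟨A, hAfin, ⟨v, hvA⟩, ?_⟩
  rw [hbdry, Set.ncard_singleton, Nat.cast_one]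
  have h1 : (ε⁻¹ : ℝ) ≤ (n : ℝ) := by
    refine (Nat.le_ceil ε⁻¹).trans ?_
    exact_mod_cast le_max_right 1 ⌈ε⁻¹⌉₊
  have h2 : (n : ℝ) ≤ (A.ncard : ℝ) := by
    exact_mod_cast (by omega : n ≤ A.ncard)
  calc (1 : ℝ) = ε * ε⁻¹ := (mul_inv_cancel₀ hε.ne').symm
    _ ≤ ε * A.ncard := mul_le_mul_of_nonneg_left (h1.trans h2) hε.le
end

section
/- Let T be an infinite locally finite tree. If Θ(T) is amenable, then T is amenable. -/
/-!
Take a finite set `A` of non-leaf vertices with small boundary in `Θ(T)` and add all leaves of `T`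
adjacent to `A`. This does not shrink the set, and it creates no new boundary: an added leaf has
its only neighbour in `A`, and a vertex of `A` on the boundary in `T` has a non-leaf neighbour
outside `A`, so it was already on the boundary in `Θ(T)`.
-/

open SimpleGraph Set

namespace SimpleGraph

variable {V : Type*} (G : SimpleGraph V)

lemma eq_of_adj_of_notMem_trimVerts {v x y : V} (hv : v ∉ trimVerts G)
    (hx : G.Adj v x) (hy : G.Adj v y) : x = y := by
  obtain ⟨w, hw⟩ := ncard_eq_one.mp (not_not.mp hv)
  have hx' : x ∈ G.neighborSet v := hx
  have hy' : y ∈ G.neighborSet v := hy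
  rw [hw, mem_singleton_iff] at hx' hy'
  rw [hx', hy']

def attachLeaves (A : Set (trimVerts G)) : Set V :=
  Subtype.val '' A ∪ {u | u ∉ trimVerts G ∧ ∃ a ∈ A, G.Adj a u}

variable {G}

lemma attachLeaves_finite (hlf : ∀ v, (G.neighborSet v).Finite) {A : Set (trimVerts G)}
    (hA : A.Finite) : (attachLeaves G A).Finite := by
  refine (hA.image _).union ((hA.biUnion fun a _ => hlf a.val).subset ?_)
  rintro u ⟨-, a, ha, hadj⟩
  exact mem_biUnion ha hadj

lemma ncard_le_ncard_attachLeaves {A : Set (trimVerts G)} (hB : (attachLeaves G A).Finite) :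
    A.ncard ≤ (attachLeaves G A).ncard := by
  rw [← ncard_image_of_injective A Subtype.val_injective]
  exact ncard_le_ncard subset_union_left hB

lemma vbdry_attachLeaves_subset (A : Set (trimVerts G)) :
    vbdry G (attachLeaves G A) ⊆ Subtype.val '' vbdry (G.induce (trimVerts G)) A := by
  rintro v ⟨hvB, u, huB, hvu⟩
  rcases hvB with ⟨a, haA, rfl⟩ | ⟨hv, a, haA, hav⟩
  · have hu : u ∈ trimVerts G := by
      by_contra hu
      exact huB (Or.inr ⟨hu, a, haA, hvu⟩)
    exact ⟨a, ⟨haA, ⟨u, hu⟩, fun huA => huB (Or.inl ⟨_, huA, rfl⟩), hvu⟩, rfl⟩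
  · obtain rfl := G.eq_of_adj_of_notMem_trimVerts hv hvu hav.symm
    exact absurd (Or.inl ⟨a, haA, rfl⟩) huB

lemma ncard_vbdry_attachLeaves_le {A : Set (trimVerts G)} (hA : A.Finite) :
    (vbdry G (attachLeaves G A)).ncard ≤ (vbdry (G.induce (trimVerts G)) A).ncard := by
  rw [← ncard_image_of_injective _ Subtype.val_injective]
  exact ncard_le_ncard (vbdry_attachLeaves_subset A) ((hA.subset fun _ hx => hx.1).image _)

end SimpleGraph

theorem amenable_of_trim_amenable_general {V : Type*} (T : SimpleGraph V)
    (hlf : ∀ v, (T.neighborSet v).Finite)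
    (h : Amenable (T.induce (trimVerts T))) :
    Amenable T := by
  intro ε hε
  obtain ⟨A, hAfin, ⟨a, ha⟩, hAbdry⟩ := h ε hε
  have hBfin := attachLeaves_finite hlf hAfin
  refine ⟨attachLeaves T A, hBfin, ⟨a, Or.inl ⟨a, ha, rfl⟩⟩, ?_⟩
  calc ((vbdry T (attachLeaves T A)).ncard : ℝ)
      ≤ (vbdry (T.induce (trimVerts T)) A).ncard := by
        exact_mod_cast ncard_vbdry_attachLeaves_le hAfin
    _ ≤ ε * A.ncard := hAbdry
    _ ≤ ε * (attachLeaves T A).ncard := by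
        gcongr
        exact ncard_le_ncard_attachLeaves hBfin

/-- If the trimmed tree `Θ(T)` of an infinite locally finite tree `T` is
(nonempty, infinite and) amenable, then `T` is amenable. -/
theorem amenable_of_trim_amenable {V : Type*} [Infinite V] (T : SimpleGraph V)
    (hT : T.IsTree) (hlf : ∀ v, (T.neighborSet v).Finite)
    (hinf : (trimVerts T).Infinite)
    (h : Amenable (T.induce (trimVerts T))) :
    Amenable T :=
  amenable_of_trim_amenable_general T hlf h
end
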